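/- In the Weyl algebra on ℂ[ζ₁,ζ₂,ζ₃], applying (ζ₁ − (ζ₃/2)·∂/∂ζ₂)^{ℓ−k} (with k ≤ ℓ) to the polynomial ∑_{j=0}^k (1/2^j) j! C(k,j) C(ℓ,j) ζ₁^{k−j} ζ₂^{ℓ−j} ζ₃^j yields ∑_{m=0}^{ℓ} ((−1)^m/2^m) ℓ^{\underline{m}} K_m(k;ℓ) ζ₁^{ℓ−m} ζ₂^{ℓ−m} ζ₃^m, where K_m is the binary Krawtchouk polynomial. -/

import Mathlib

open Finset MvPolynomial

/-- Falling factorial `r(r-1)⋯(r-j+1)`. -/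
noncomputable def fallFac (r : ℂ) (j : ℕ) : ℂ := (descPochhammer ℂ j).eval r

/-- Generalized binomial coefficient. -/
noncomputable def gchoose (a : ℂ) (k : ℕ) : ℂ := fallFac a k / (k.factorial : ℂ)

/-- Binary Krawtchouk polynomial. -/
noncomputable def Kraw (m : ℕ) (x y : ℂ) : ℂ :=
  ∑ j ∈ range (m + 1), (-1 : ℂ) ^ j * gchoose x j * gchoose (y - x) (m - j)

/-- The Weyl-algebra operator `ζ₁ − (ζ₃/2)·∂/∂ζ₂` acting on `ℂ[ζ₁,ζ₂,ζ₃]`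
(variables indexed `0, 1, 2`). -/
noncomputable def weylOp' (p : MvPolynomial (Fin 3) ℂ) : MvPolynomial (Fin 3) ℂ :=
  X 0 * p - C (1 / 2 : ℂ) * X 2 * pderiv 1 p

/-!
The operator preserves the shape `∑ⱼ cⱼ ζ₁^{N-j} ζ₂^{ℓ-j} ζ₃^j` (`weylPoly`): it raises `N` by one
and acts on the coefficients by `c_{j+1} ↦ c_{j+1} - (ℓ - j)/2 · c_j`. Writing
`cⱼ = (-1/2)^j ℓ^{\underline j} bⱼ`, this becomes multiplication of `∑ bⱼ tʲ` by `1 + t`. The starting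
polynomial has `∑ bⱼ tʲ = (1 - t)^k`, so after `ℓ - k` steps it is `(1 - t)^k (1 + t)^{ℓ-k}`, the
generating function of the Krawtchouk polynomials `K_m(k; ℓ)`.
-/

namespace Polynomial

lemma coeff_one_sub_X_pow {R : Type*} [CommRing R] (n k : ℕ) :
    ((1 - X : R[X]) ^ n).coeff k = (-1) ^ k * n.choose k := by
  induction n generalizing k with
  | zero => cases k <;> simp [coeff_one]
  | succ n ih =>
    cases k with
    | zero => simp [coeff_zero_eq_eval_zero]
    | succ k =>
      rw [pow_succ', sub_mul, one_mul, coeff_sub, coeff_X_mul, ih, ih, Nat.choose_succ_succ]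
      push_cast
      ring

lemma coeff_one_add_X_mul_succ {R : Type*} [Semiring R] (p : R[X]) (j : ℕ) :
    ((1 + X) * p).coeff (j + 1) = p.coeff (j + 1) + p.coeff j := by
  rw [add_mul, one_mul, coeff_add, coeff_X_mul]

end Polynomial

lemma fallFac_natCast (n j : ℕ) : fallFac n j = j.factorial * n.choose j := by
  rw [fallFac, descPochhammer_eval_eq_descFactorial, Nat.descFactorial_eq_factorial_mul_choose]
  push_cast
  rfl

lemma gchoose_natCast (n j : ℕ) : gchoose n j = n.choose j :=
  (Nat.cast_choose_eq_descPochhammer_div ℂ n j).symm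

lemma Kraw_natCast_add (m a b : ℕ) :
    Kraw m a (a + b : ℕ) =
      ((1 - Polynomial.X) ^ a * (1 + Polynomial.X) ^ b : Polynomial ℂ).coeff m := by
  rw [Kraw, Polynomial.coeff_mul, Nat.sum_antidiagonal_eq_sum_range_succ_mk]
  refine sum_congr rfl fun j _ => ?_
  rw [Nat.cast_add, add_sub_cancel_left, gchoose_natCast, gchoose_natCast,
    Polynomial.coeff_one_sub_X_pow, Polynomial.coeff_one_add_X_pow]

lemma weylOp'_sum {ι : Type*} (s : Finset ι) (f : ι → MvPolynomial (Fin 3) ℂ) :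
    weylOp' (∑ i ∈ s, f i) = ∑ i ∈ s, weylOp' (f i) := by
  simp only [weylOp', map_sum, mul_sum, sum_sub_distrib]

lemma weylOp'_monomial (c : ℂ) {N j : ℕ} (ℓ : ℕ) (hj : j ≤ N) :
    weylOp' (C c * X 0 ^ (N - j) * X 1 ^ (ℓ - j) * X 2 ^ j) =
      C c * X 0 ^ (N + 1 - j) * X 1 ^ (ℓ - j) * X 2 ^ j -
        C ((ℓ - j : ℕ) / 2 * c) * X 0 ^ (N + 1 - (j + 1)) * X 1 ^ (ℓ - (j + 1)) * X 2 ^ (j + 1) := by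
  rw [Nat.sub_add_comm hj, Nat.add_sub_add_right, Nat.sub_succ']
  simp only [weylOp', Fin.isValue, div_eq_mul_inv, one_mul, Derivation.leibniz,
    Derivation.leibniz_pow, pderiv_X, ne_eq, Fin.reduceEq, not_false_eq_true, Pi.single_eq_of_ne,
    smul_eq_mul, mul_zero, Pi.single_eq_same, mul_one, nsmul_eq_mul, zero_ne_one,
    derivation_C, add_zero, zero_add, map_mul, map_natCast]
  ring

noncomputable def weylPoly (ℓ N : ℕ) (c : ℕ → ℂ) : MvPolynomial (Fin 3) ℂ :=
  ∑ j ∈ range (ℓ + 1), C (c j) * X 0 ^ (N - j) * X 1 ^ (ℓ - j) * X 2 ^ j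

lemma weylOp'_weylPoly {ℓ N : ℕ} {c c' : ℕ → ℂ} (hc : ∀ j, N < j → c j = 0)
    (h₀ : c' 0 = c 0) (hsucc : ∀ j < ℓ, c' (j + 1) = c (j + 1) - (ℓ - j) / 2 * c j) :
    weylOp' (weylPoly ℓ N c) = weylPoly ℓ (N + 1) c' := by
  have hterm : ∀ j, weylOp' (C (c j) * X 0 ^ (N - j) * X 1 ^ (ℓ - j) * X 2 ^ j) =
      C (c j) * X 0 ^ (N + 1 - j) * X 1 ^ (ℓ - j) * X 2 ^ j -
        C ((ℓ - j : ℕ) / 2 * c j) * X 0 ^ (N + 1 - (j + 1)) * X 1 ^ (ℓ - (j + 1)) * X 2 ^ (j + 1) := by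
    intro j
    by_cases hj : j ≤ N
    · exact weylOp'_monomial (c j) ℓ hj
    · simp [hc j (not_le.mp hj), weylOp']
  rw [weylPoly, weylOp'_sum, sum_congr rfl fun j _ => hterm j, sum_sub_distrib, sum_range_succ',
    sum_range_succ _ ℓ, weylPoly, sum_range_succ', h₀]
  simp only [Nat.sub_self, Nat.cast_zero, zero_div, zero_mul, map_zero, add_zero]
  rw [add_sub_right_comm, ← sum_sub_distrib]
  congr 1
  refine sum_congr rfl fun j hj => ?_
  have hjℓ : j < ℓ := mem_range.mp hj
  rw [hsucc j hjℓ, Nat.cast_sub hjℓ.le, map_sub]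
  ring

noncomputable def weylCoeff (k ℓ n j : ℕ) : ℂ :=
  (-1 / 2) ^ j * fallFac ℓ j *
    ((1 - Polynomial.X) ^ k * (1 + Polynomial.X) ^ n : Polynomial ℂ).coeff j

lemma weylCoeff_eq_zero {k ℓ n j : ℕ} (hj : k + n < j) : weylCoeff k ℓ n j = 0 := by
  have hdeg :
      ((1 - Polynomial.X) ^ k * (1 + Polynomial.X) ^ n : Polynomial ℂ).natDegree ≤ k + n := by
    compute_degree
  rw [weylCoeff, Polynomial.coeff_eq_zero_of_natDegree_lt (hdeg.trans_lt hj), mul_zero]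

lemma weylCoeff_succ_zero (k ℓ n : ℕ) : weylCoeff k ℓ (n + 1) 0 = weylCoeff k ℓ n 0 := by
  simp [weylCoeff, Polynomial.coeff_zero_eq_eval_zero]

lemma weylCoeff_succ_succ (k ℓ n j : ℕ) :
    weylCoeff k ℓ (n + 1) (j + 1) = weylCoeff k ℓ n (j + 1) - (ℓ - j) / 2 * weylCoeff k ℓ n j := by
  rw [weylCoeff, weylCoeff, weylCoeff, pow_succ' (1 + _), mul_left_comm,
    Polynomial.coeff_one_add_X_mul_succ, fallFac, fallFac, descPochhammer_succ_eval]
  ring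

lemma weylOp'_iterate_weylPoly (k ℓ n : ℕ) :
    weylOp'^[n] (weylPoly ℓ k (weylCoeff k ℓ 0)) = weylPoly ℓ (k + n) (weylCoeff k ℓ n) := by
  induction n with
  | zero => rfl
  | succ n ih =>
    rw [Function.iterate_succ_apply', ih]
    exact weylOp'_weylPoly (fun j => weylCoeff_eq_zero) (weylCoeff_succ_zero k ℓ n)
      fun j _ => weylCoeff_succ_succ k ℓ n j

lemma weylPoly_weylCoeff_zero {k ℓ : ℕ} (h : k ≤ ℓ) :
    weylPoly ℓ k (weylCoeff k ℓ 0) =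
      ∑ j ∈ range (k + 1),
        C ((1 / 2 ^ j : ℂ) * (j.factorial : ℂ) * (k.choose j : ℂ) * (ℓ.choose j : ℂ)) *
          X 0 ^ (k - j) * X 1 ^ (ℓ - j) * X 2 ^ j := by
  have hcoeff : ∀ j, weylCoeff k ℓ 0 j = 1 / 2 ^ j * j.factorial * k.choose j * ℓ.choose j := by
    intro j
    have hsign : (-1 / 2 : ℂ) ^ j * (-1) ^ j = 1 / 2 ^ j := by
      rw [← mul_pow, ← one_div_pow]
      norm_num
    rw [weylCoeff, pow_zero, mul_one, Polynomial.coeff_one_sub_X_pow, fallFac_natCast]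
    linear_combination (j.factorial * k.choose j * ℓ.choose j : ℂ) * hsign
  simp_rw [weylPoly, hcoeff]
  refine (sum_subset (range_subset_range.mpr (by omega)) fun j _ hj => ?_).symm
  rw [Nat.choose_eq_zero_of_lt (by simpa using hj)]
  simp

lemma weylCoeff_sub_eq_Kraw {k ℓ : ℕ} (h : k ≤ ℓ) (m : ℕ) :
    weylCoeff k ℓ (ℓ - k) m = (-1) ^ m / 2 ^ m * fallFac ℓ m * Kraw m k ℓ := by
  obtain ⟨d, rfl⟩ := Nat.exists_eq_add_of_le h
  rw [weylCoeff, Nat.add_sub_cancel_left, Kraw_natCast_add, div_pow]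

/-- For `k ≤ ℓ`, applying `(ζ₁ − (ζ₃/2)∂/∂ζ₂)^{ℓ−k}` to
`∑_{j=0}^k (1/2^j) j! C(k,j) C(ℓ,j) ζ₁^{k−j} ζ₂^{ℓ−j} ζ₃^j` yields
`∑_{m=0}^ℓ ((−1)^m/2^m) ℓ^{\underline m} K_m(k;ℓ) ζ₁^{ℓ−m} ζ₂^{ℓ−m} ζ₃^m`. -/
theorem weylOp'_iterate (k ℓ : ℕ) (h : k ≤ ℓ) :
    weylOp'^[ℓ - k]
        (∑ j ∈ range (k + 1),
          C ((1 / 2 ^ j : ℂ) * (j.factorial : ℂ) * (k.choose j : ℂ) * (ℓ.choose j : ℂ)) *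
            X 0 ^ (k - j) * X 1 ^ (ℓ - j) * X 2 ^ j) =
      ∑ m ∈ range (ℓ + 1),
        C (((-1 : ℂ) ^ m / 2 ^ m) * fallFac (ℓ : ℂ) m * Kraw m (k : ℂ) (ℓ : ℂ)) *
          X 0 ^ (ℓ - m) * X 1 ^ (ℓ - m) * X 2 ^ m := by
  rw [← weylPoly_weylCoeff_zero h, weylOp'_iterate_weylPoly, Nat.add_sub_cancel' h, weylPoly]
  simp_rw [weylCoeff_sub_eq_Kraw h]
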